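/- The two-player game induced by the two-party matching-pennies election — in which player Odd chooses a nominee a_o ∈ {a₁, a₃}, player Even chooses a nominee a_e ∈ {a₂, a₄}, Odd's utility is 1 if the general-election FPTP winner equals a_o and 0 otherwise, and Even's utility is 1 if the winner equals a_e and 0 otherwise — has no pure Nash equilibrium: from every pure strategy profile, some player can strictly increase her utility by a unilateral deviation. Consequently, primary elections under FPTP with fixed tie-breaking may admit no pure-strategy Nash equilibrium. -/

import Mathlib

/-! The two-party matching-pennies election.  Candidates are `Fin 4`, with
`a₁ = 0, a₂ = 1, a₃ = 2, a₄ = 3`; the tie-breaking order `a₁ ≻ a₂ ≻ a₃ ≻ a₄`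
is the natural order on `Fin 4` (the least index wins ties). -/

open Classical in
/-- The FPTP winner with respect to the tie-breaking linear order `r`:
the `r`-least candidate among the candidates maximizing the tally `t`. -/
noncomputable def fptpWinner {A : Type*} [Fintype A] [Nonempty A]
    (r : LinearOrder A) (t : A → ℕ) : A :=
  @Finset.min' A r (Finset.univ.filter fun a => ∀ b, t b ≤ t a) (by
    obtain ⟨a, -, ha⟩ := Finset.exists_max_image (Finset.univ : Finset A) t
      ⟨Classical.arbitrary A, Finset.mem_univ _⟩
    exact ⟨a, Finset.mem_filter.mpr ⟨Finset.mem_univ _, fun b => ha b (Finset.mem_univ _)⟩⟩)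

/-- List voter `v_i` votes for whichever of the two finalists `ao, ae` appears
first on the cyclic list `(a_i, a_{i+1}, a_{i+2}, a_{i+3})` (indices mod 4). -/
def listVote (ao ae : Fin 4) (i : Fin 4) : Fin 4 :=
  if i = ao ∨ i = ae then i
  else if i + 1 = ao ∨ i + 1 = ae then i + 1
  else if i + 2 = ao ∨ i + 2 = ae then i + 2
  else i + 3

/-- General-election tally: the four list voters plus `v_odd` (who votes for
`ao`) and `v_even` (who votes for `ae`). -/
def geTally (ao ae : Fin 4) (c : Fin 4) : ℕ :=
  (Finset.univ.filter fun i : Fin 4 => listVote ao ae i = c).card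
    + (if c = ao then 1 else 0) + (if c = ae then 1 else 0)

/-- General-election FPTP winner given the finalists `ao` and `ae`. -/
noncomputable def geWinner (ao ae : Fin 4) : Fin 4 :=
  fptpWinner inferInstance (geTally ao ae)

/-- Odd's utility: 1 if the GE winner is her nominee `ao`, else 0. -/
noncomputable def uOddMP (ao ae : Fin 4) : ℚ := if geWinner ao ae = ao then 1 else 0

/-- Even's utility: 1 if the GE winner is her nominee `ae`, else 0. -/
noncomputable def uEvenMP (ao ae : Fin 4) : ℚ := if geWinner ao ae = ae then 1 else 0

/-! In every profile one finalist receives four of the six votes and the other two, so the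
tie-breaking order never matters. Odd's nominee wins on the profiles `(a₁, a₂)` and `(a₃, a₄)`
and Even's on the other two, which is matching pennies: the losing party can always switch
nominee and win. -/

lemma fptpWinner_eq_of_forall_lt {A : Type*} [Fintype A] [Nonempty A] (r : LinearOrder A)
    {t : A → ℕ} {w : A} (hw : ∀ b ≠ w, t b < t w) : fptpWinner r t = w := by
  classical
  have hmax : (Finset.univ.filter fun a => ∀ b, t b ≤ t a) = {w} := by
    ext a
    simp only [Finset.mem_filter, Finset.mem_univ, true_and, Finset.mem_singleton]
    refine ⟨fun ha => by_contra fun haw => (hw a haw).not_ge (ha w), ?_⟩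
    rintro rfl b
    rcases eq_or_ne b a with rfl | hb
    exacts [le_rfl, (hw b hb).le]
  unfold fptpWinner
  convert @Finset.min'_singleton A r w

lemma geWinner_zero_one : geWinner 0 1 = 0 :=
  fptpWinner_eq_of_forall_lt _ (by decide)

lemma geWinner_zero_three : geWinner 0 3 = 3 :=
  fptpWinner_eq_of_forall_lt _ (by decide)

lemma geWinner_two_one : geWinner 2 1 = 1 :=
  fptpWinner_eq_of_forall_lt _ (by decide)

lemma geWinner_two_three : geWinner 2 3 = 2 :=
  fptpWinner_eq_of_forall_lt _ (by decide)

/-- the two-player game induced by the two-party matching-pennies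
election, where Odd chooses `ao ∈ {a₁, a₃}` and Even chooses `ae ∈ {a₂, a₄}`,
has no pure Nash equilibrium: from every profile some player can strictly
increase her utility by a unilateral deviation. -/
theorem stmt6 :
    ¬ ∃ (ao ae : Fin 4), (ao = 0 ∨ ao = 2) ∧ (ae = 1 ∨ ae = 3) ∧
      (∀ ao' : Fin 4, (ao' = 0 ∨ ao' = 2) → uOddMP ao' ae ≤ uOddMP ao ae) ∧
      (∀ ae' : Fin 4, (ae' = 1 ∨ ae' = 3) → uEvenMP ao ae' ≤ uEvenMP ao ae) := by
  rintro ⟨ao, ae, rfl | rfl, rfl | rfl, hOdd, hEven⟩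
  · have := hEven 3 (by simp)
    norm_num [uEvenMP, Fin.ext_iff, geWinner_zero_one, geWinner_zero_three] at this
  · have := hOdd 2 (by simp)
    norm_num [uOddMP, Fin.ext_iff, geWinner_zero_three, geWinner_two_three] at this
  · have := hOdd 0 (by simp)
    norm_num [uOddMP, Fin.ext_iff, geWinner_two_one, geWinner_zero_one] at this
  · have := hEven 1 (by simp)
    norm_num [uEvenMP, Fin.ext_iff, geWinner_two_three, geWinner_two_one] at this
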